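/- Let x = c_{−1} p + c_0 + c_1 q + ⋯ + c_l q^l with c_{−1}, c_0, …, c_l ∈ F and c_{−1} ≠ 0. Then x ∈ Δ1; in particular, x is solvable. (Claim at the beginning of Section 4) -/
import Mathlib


open scoped BigOperators

/-- Defining relation of the Weyl algebra: `p * q = q * p + 1`. -/
inductive WeylRel (F : Type*) [CommRing F] :
    FreeAlgebra F (Fin 2) → FreeAlgebra F (Fin 2) → Prop
  | comm : WeylRel F (FreeAlgebra.ι F 0 * FreeAlgebra.ι F 1)
      (FreeAlgebra.ι F 1 * FreeAlgebra.ι F 0 + 1)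

/-- The Weyl algebra over `F`. -/
abbrev WeylAlgebra (F : Type*) [CommRing F] := RingQuot (WeylRel F)

variable (F : Type*) [Field F] [CharZero F]

/-- The generator `p` of the Weyl algebra. -/
noncomputable def Wp : WeylAlgebra F :=
  RingQuot.mkAlgHom F (WeylRel F) (FreeAlgebra.ι F 0)

/-- The generator `q` of the Weyl algebra. -/
noncomputable def Wq : WeylAlgebra F :=
  RingQuot.mkAlgHom F (WeylRel F) (FreeAlgebra.ι F 1)

/-- `x` is solvable if `[x, y] = 1` for some `y`. -/
def Solvable (x : WeylAlgebra F) : Prop := ∃ y : WeylAlgebra F, x * y - y * x = 1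

/-- The centralizer `C(x)`. -/
def Cset (x : WeylAlgebra F) : Set (WeylAlgebra F) := {y | x * y - y * x = 0}

/-- `N(x) = {y | (ad x)^n y = 0 for some n ≥ 1}`. -/
def Nset (x : WeylAlgebra F) : Set (WeylAlgebra F) :=
  {y | ∃ n : ℕ, 1 ≤ n ∧ (fun z => x * z - z * x)^[n] y = 0}

/-- `D(x) = {y | [x,y] = λ y for some scalar λ}`. -/
def Dset (x : WeylAlgebra F) : Set (WeylAlgebra F) :=
  {y | ∃ c : F, x * y - y * x = c • y}

def Delta1 : Set (WeylAlgebra F) :=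
  {x | x ∉ Set.range (algebraMap F (WeylAlgebra F)) ∧
    Nset F x = Set.univ ∧ Dset F x = Cset F x}

def Delta2 : Set (WeylAlgebra F) :=
  {x | x ∉ Set.range (algebraMap F (WeylAlgebra F)) ∧
    Nset F x ≠ Set.univ ∧ Nset F x ≠ Cset F x ∧ Dset F x = Cset F x}

/-- The graded component `A_s = {a | [pq, a] = s • a}`. -/
def Wgrade (s : ℤ) : Set (WeylAlgebra F) :=
  {a | (Wp F * Wq F) * a - a * (Wp F * Wq F) = s • a}

/-- The monomial `p^i q^j`. -/
noncomputable def Wmono (i j : ℕ) : WeylAlgebra F := Wp F ^ i * Wq F ^ j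

/-- `α` is the coordinate family of `x` in the basis `p^i q^j`. -/
def Represents (α : (ℕ × ℕ) →₀ F) (x : WeylAlgebra F) : Prop :=
  x = α.sum fun ij c => c • Wmono F ij.1 ij.2

/-- `v_{ρ,σ}(x) = max { iρ + jσ | (i,j) ∈ E(x) }`. -/
def vdeg (α : (ℕ × ℕ) →₀ F) (ρ σ : ℕ) : ℕ :=
  α.support.sup fun ij => ij.1 * ρ + ij.2 * σ

/-- `E_{ρ,σ}(x)`. -/
def Eset (α : (ℕ × ℕ) →₀ F) (ρ σ : ℕ) : Finset (ℕ × ℕ) :=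
  α.support.filter fun ij => ij.1 * ρ + ij.2 * σ = vdeg F α ρ σ

/-- The `(ρ,σ)`-polynomial of `x`, an element of `F[X,Y]`. -/
noncomputable def wpoly (α : (ℕ × ℕ) →₀ F) (ρ σ : ℕ) : MvPolynomial (Fin 2) F :=
  ∑ ij ∈ Eset F α ρ σ,
    MvPolynomial.monomial (Finsupp.single 0 ij.1 + Finsupp.single 1 ij.2) (α ij)

/-- The `(ρ,σ)`-term of `x`, an element of the Weyl algebra. -/
noncomputable def wterm (α : (ℕ × ℕ) →₀ F) (ρ σ : ℕ) : WeylAlgebra F :=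
  ∑ ij ∈ Eset F α ρ σ, α ij • Wmono F ij.1 ij.2

section AuxProof
set_option linter.unusedSectionVars false

theorem pq_rel : Wp F * Wq F = Wq F * Wp F + 1 := by
  have := RingQuot.mkAlgHom_rel F (WeylRel.comm (F := F))
  simpa [Wp, Wq, map_mul, map_add, map_one] using this

/-- The polynomial representation. -/
noncomputable def Wrep : WeylAlgebra F →ₐ[F] Module.End F (Polynomial F) :=
  RingQuot.liftAlgHom F ⟨FreeAlgebra.lift F
      ![(Polynomial.derivative : Polynomial F →ₗ[F] Polynomial F),
        LinearMap.mulLeft F Polynomial.X], by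
    rintro _ _ ⟨⟩
    simp only [map_mul, map_add, map_one, FreeAlgebra.lift_ι_apply,
      Matrix.cons_val_zero, Matrix.cons_val_one, Matrix.head_cons]
    refine LinearMap.ext fun f => ?_
    simp only [Module.End.mul_apply, LinearMap.mulLeft_apply, LinearMap.add_apply,
      Module.End.one_apply, Polynomial.derivative_mul, Polynomial.derivative_X, one_mul]
    ring⟩

theorem Wone_ne_zero : (1 : WeylAlgebra F) ≠ 0 := by
  intro h
  have h2 : (Wrep F 1) (1 : Polynomial F) = (Wrep F 0) (1 : Polynomial F) := by rw [h]
  simp only [map_one, map_zero, Module.End.one_apply, LinearMap.zero_apply] at h2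
  exact one_ne_zero h2

noncomputable instance : Nontrivial (WeylAlgebra F) := ⟨1, 0, Wone_ne_zero F⟩

theorem adjoin_pq : Algebra.adjoin F {Wp F, Wq F} = ⊤ := by
  have h : Algebra.adjoin F
      ((RingQuot.mkAlgHom F (WeylRel F)) '' Set.range (FreeAlgebra.ι F)) = ⊤ := by
    rw [← AlgHom.map_adjoin, FreeAlgebra.adjoin_range_ι, Algebra.map_top,
      AlgHom.range_eq_top]
    exact RingQuot.mkAlgHom_surjective F _
  rw [← h]
  congr 1
  rw [← Set.range_comp]
  ext z
  constructor
  · rintro (rfl | rfl)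
    exacts [⟨0, rfl⟩, ⟨1, rfl⟩]
  · rintro ⟨i, rfl⟩
    fin_cases i
    · exact Or.inl rfl
    · exact Or.inr rfl

/-- The inner derivation `ad x`. -/
def adx (x : WeylAlgebra F) : WeylAlgebra F → WeylAlgebra F := fun z => x * z - z * x

variable {F}

theorem adx_add (x a b : WeylAlgebra F) : adx F x (a + b) = adx F x a + adx F x b := by
  simp only [adx, mul_add, add_mul]; abel

theorem adx_smul (x : WeylAlgebra F) (c : F) (a : WeylAlgebra F) :
    adx F x (c • a) = c • adx F x a := by
  simp only [adx, mul_smul_comm, smul_mul_assoc, smul_sub]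

theorem adx_zero (x : WeylAlgebra F) : adx F x 0 = 0 := by simp [adx]

theorem adx_mul (x a b : WeylAlgebra F) :
    adx F x (a * b) = adx F x a * b + a * adx F x b := by
  simp only [adx, mul_sub, sub_mul, mul_assoc]; abel

theorem adx_iter_zero (x : WeylAlgebra F) (n : ℕ) : (adx F x)^[n] 0 = 0 := by
  induction n with
  | zero => rfl
  | succ n ih => rw [Function.iterate_succ_apply, adx_zero, ih]

theorem adx_iter_add (x : WeylAlgebra F) (n : ℕ) (a b : WeylAlgebra F) :
    (adx F x)^[n] (a + b) = (adx F x)^[n] a + (adx F x)^[n] b := by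
  induction n generalizing a b with
  | zero => rfl
  | succ n ih => rw [Function.iterate_succ_apply, adx_add, ih,
      Function.iterate_succ_apply, Function.iterate_succ_apply]

theorem adx_iter_smul (x : WeylAlgebra F) (n : ℕ) (c : F) (a : WeylAlgebra F) :
    (adx F x)^[n] (c • a) = c • (adx F x)^[n] a := by
  induction n generalizing a with
  | zero => rfl
  | succ n ih => rw [Function.iterate_succ_apply, adx_smul, ih,
      Function.iterate_succ_apply]

theorem adx_iter_stable (x : WeylAlgebra F) {n k : ℕ} (h : n ≤ k) {a : WeylAlgebra F}
    (ha : (adx F x)^[n] a = 0) : (adx F x)^[k] a = 0 := by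
  rw [← Nat.sub_add_cancel h, Function.iterate_add_apply, ha, adx_iter_zero]

theorem adx_iter_mul (x : WeylAlgebra F) :
    ∀ s n m a b, n + m ≤ s → (adx F x)^[n] a = 0 → (adx F x)^[m] b = 0 →
      (adx F x)^[n + m] (a * b) = 0 := by
  intro s
  induction s with
  | zero =>
    intro n m a b h ha hb
    obtain ⟨rfl, rfl⟩ : n = 0 ∧ m = 0 := by omega
    simpa using congrArg (· * b) ha
  | succ s ih =>
    intro n m a b h ha hb
    match n, m with
    | 0, m => rw [Function.iterate_zero_apply] at ha; subst ha
              rw [zero_mul, adx_iter_zero]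
    | n + 1, 0 => rw [Function.iterate_zero_apply] at hb; subst hb
                  rw [mul_zero, adx_iter_zero]
    | n + 1, m + 1 =>
      have e : n + 1 + (m + 1) = (n + (m + 1)) + 1 := by omega
      rw [e, Function.iterate_succ_apply, adx_mul, adx_iter_add]
      have h1 : (adx F x)^[n + (m + 1)] (adx F x a * b) = 0 := by
        refine ih n (m + 1) _ _ (by omega) ?_ hb
        rw [← Function.iterate_succ_apply]; exact ha
      have h2 : (adx F x)^[n + (m + 1)] (a * adx F x b) = 0 := by
        have : n + (m + 1) = (n + 1) + m := by omega
        rw [this]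
        refine ih (n + 1) m _ _ (by omega) ha ?_
        rw [← Function.iterate_succ_apply]; exact hb
      rw [h1, h2, add_zero]

variable (F)

/-- The locally ad-nilpotent elements, as a subalgebra. -/
noncomputable def Nsub (x : WeylAlgebra F) : Subalgebra F (WeylAlgebra F) where
  carrier := {y | ∃ n, (adx F x)^[n] y = 0}
  mul_mem' := by
    rintro a b ⟨n, ha⟩ ⟨m, hb⟩
    exact ⟨n + m, adx_iter_mul x (n + m) n m a b le_rfl ha hb⟩
  one_mem' := ⟨1, by simp [adx]⟩
  add_mem' := by
    rintro a b ⟨n, ha⟩ ⟨m, hb⟩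
    exact ⟨max n m, by
      rw [adx_iter_add, adx_iter_stable x (le_max_left n m) ha,
        adx_iter_stable x (le_max_right n m) hb, add_zero]⟩
  zero_mem' := ⟨0, rfl⟩
  algebraMap_mem' := fun r => ⟨1, by
    simp [adx, Algebra.commutes r x]⟩

variable {F}

theorem mem_Nsub_of_adx (x y : WeylAlgebra F) (h : adx F x y ∈ Nsub F x) :
    y ∈ Nsub F x := by
  obtain ⟨n, hn⟩ := h
  exact ⟨n + 1, by rw [Function.iterate_succ_apply]; exact hn⟩

theorem comm_p_qpow (n : ℕ) :
    Wp F * Wq F ^ n = Wq F ^ n * Wp F + (n : F) • Wq F ^ (n - 1) := by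
  induction n with
  | zero => simp
  | succ n ih =>
    match n, ih with
    | 0, _ => simpa using pq_rel F
    | n + 1, ih =>
      have : Wp F * Wq F ^ (n + 2) = (Wp F * Wq F ^ (n + 1)) * Wq F := by
        rw [pow_succ, mul_assoc]
      rw [this, ih, add_mul, smul_mul_assoc, mul_assoc, pq_rel, Nat.add_sub_cancel,
        Nat.add_sub_cancel, ← pow_succ, mul_add, mul_one, ← mul_assoc, ← pow_succ]
      push_cast
      module

section Main

variable (l : ℕ) (cneg : F) (c : ℕ → F) (x : WeylAlgebra F)
variable (hx : x = cneg • Wp F + ∑ i ∈ Finset.range (l + 1), c i • Wq F ^ i)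

include hx

theorem adx_q_eq : adx F x (Wq F) = cneg • 1 := by
  have hsum : (∑ i ∈ Finset.range (l + 1), c i • Wq F ^ i) * Wq F
      = Wq F * ∑ i ∈ Finset.range (l + 1), c i • Wq F ^ i := by
    rw [Finset.sum_mul, Finset.mul_sum]
    refine Finset.sum_congr rfl fun i _ => ?_
    rw [smul_mul_assoc, mul_smul_comm, ← pow_succ, ← pow_succ']
  rw [adx, hx, add_mul, mul_add, hsum, smul_mul_assoc, mul_smul_comm, pq_rel]
  module

theorem q_mem_Nsub : Wq F ∈ Nsub F x := by
  refine ⟨2, ?_⟩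
  show adx F x (adx F x (Wq F)) = 0
  rw [adx_q_eq l cneg c x hx, adx_smul]
  simp [adx]

theorem p_mem_Nsub : Wp F ∈ Nsub F x := by
  refine mem_Nsub_of_adx x _ ?_
  have : adx F x (Wp F) =
      ∑ i ∈ Finset.range (l + 1), c i • (Wq F ^ i * Wp F - Wp F * Wq F ^ i) := by
    rw [adx, hx]
    simp only [add_mul, mul_add, Finset.sum_mul, Finset.mul_sum, smul_mul_assoc,
      mul_smul_comm, smul_sub, Finset.sum_sub_distrib]
    module
  rw [this]
  refine Subalgebra.sum_mem _ fun i _ => Subalgebra.smul_mem _ ?_ _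
  have hq := q_mem_Nsub l cneg c x hx
  have : Wq F ^ i * Wp F - Wp F * Wq F ^ i = -((i : F) • Wq F ^ (i - 1)) := by
    rw [comm_p_qpow]; module
  rw [this]
  exact neg_mem (Subalgebra.smul_mem _ (pow_mem hq _) _)

theorem Nsub_eq_top : Nsub F x = ⊤ := by
  rw [eq_top_iff, ← adjoin_pq F]
  refine Algebra.adjoin_le ?_
  rintro z (rfl | rfl)
  · exact p_mem_Nsub l cneg c x hx
  · exact q_mem_Nsub l cneg c x hx

end Main

end AuxProof

/-- Claim at the beginning of Section 4. -/
theorem mem_Delta1_of_linear_in_p (l : ℕ) (cneg : F) (c : ℕ → F) (hcneg : cneg ≠ 0)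
    (x : WeylAlgebra F)
    (hx : x = cneg • Wp F + ∑ i ∈ Finset.range (l + 1), c i • Wq F ^ i) :
    x ∈ Delta1 F ∧ Solvable F x := by
  have hNtop := Nsub_eq_top l cneg c x hx
  have hN : Nset F x = Set.univ := by
    ext y
    simp only [Set.mem_univ, iff_true, Nset, Set.mem_setOf_eq]
    have hy : y ∈ Nsub F x := hNtop.symm ▸ Algebra.mem_top
    obtain ⟨n, hn⟩ := hy
    exact ⟨n + 1, by omega, adx_iter_stable x (Nat.le_succ n) hn⟩
  have hD : Dset F x = Cset F x := by
    ext y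
    simp only [Dset, Cset, Set.mem_setOf_eq]
    constructor
    · rintro ⟨cc, hcc⟩
      have hy : y ∈ Nset F x := by rw [hN]; trivial
      obtain ⟨n, hn1, hn⟩ := hy
      have key : ∀ k, (adx F x)^[k] y = cc ^ k • y := by
        intro k
        induction k with
        | zero => simp
        | succ k ih =>
          rw [Function.iterate_succ_apply, show adx F x y = cc • y from hcc,
            adx_iter_smul, ih, smul_smul, ← pow_succ']
      have hzero : cc ^ n • y = 0 := by
        rw [← key n]; exact hn
      rcases smul_eq_zero.mp hzero with h | h
      · rw [hcc, pow_eq_zero_iff (by omega : n ≠ 0) |>.mp h, zero_smul]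
      · rw [hcc, h, smul_zero]
    · intro h
      exact ⟨0, by rw [h, zero_smul]⟩
  have hxq : x * Wq F - Wq F * x = cneg • 1 := adx_q_eq l cneg c x hx
  refine ⟨⟨?_, hN, hD⟩, ⟨cneg⁻¹ • Wq F, ?_⟩⟩
  · rintro ⟨r, hr⟩
    have h0 : x * Wq F - Wq F * x = 0 := by
      rw [← hr, ← Algebra.commutes r (Wq F), sub_self]
    rw [hxq] at h0
    rcases smul_eq_zero.mp h0 with h | h
    exacts [hcneg h, Wone_ne_zero F h]
  · calc x * (cneg⁻¹ • Wq F) - (cneg⁻¹ • Wq F) * x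
        = cneg⁻¹ • (x * Wq F - Wq F * x) := by
          rw [mul_smul_comm, smul_mul_assoc, smul_sub]
      _ = 1 := by rw [hxq, smul_smul, inv_mul_cancel₀ hcneg, one_smul]
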